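/- arXiv:math/0611296 — 2 statements merged into one kernel-verified Lean document; each statement's English description precedes it below -/
import Mathlib

section
/- Let (P,s,v) be a signed poset and n ≥ 2 an integer. If (P,s,v) is an α-signed differential poset, then ∑_{x ∈ P_n} v(x)·e(x) = 0. If (P,s,v) is a β-signed differential poset, then ∑_{x ∈ P_n} v(x)·e(x) = 2^{⌊n/2⌋}. -/
open scoped Classical

namespace SDP

variable {P : Type*} [PartialOrder P] [OrderBot P]

/-- The sign of a saturated chain, recorded as a list: the product of the
edge signs `s` over consecutive pairs. -/
def chainSign {α : Type*} (s : α → α → ℤ) : List α → ℤ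
  | [] => 1
  | [_] => 1
  | x :: y :: rest => s x y * chainSign s (y :: rest)

/-- Maximal chains from `⊥` to `x`: lists whose consecutive entries are covers,
starting at `⊥` and ending at `x`. -/
def chainsTo (x : P) : Set (List P) :=
  {l : List P | l.Chain' (· ⋖ ·) ∧ l.head? = some (⊥ : P) ∧ l.getLast? = some x}

/-- `e(x)`: the signed sum of maximal chains from `⊥` to `x`. -/
noncomputable def e (s : P → P → ℤ) (x : P) : ℤ :=
  ∑ᶠ l ∈ chainsTo x, chainSign s l

variable (K : Type*) [Field K]

/-- The up operator on `K̂P`, written coefficientwise: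
`(U f)(y) = ∑_{x ⋖ y} s(x ⋖ y) f(x)`. -/
noncomputable def Uop (s : P → P → ℤ) (f : P → K) : P → K :=
  fun y => ∑ᶠ x ∈ {x : P | x ⋖ y}, (s x y : K) * f x

/-- The down operator on `K̂P`, written coefficientwise:
`(D f)(x) = ∑_{y ⋗ x} s(x ⋖ y) v(y) v(x) f(y)`. -/
noncomputable def Dop (s : P → P → ℤ) (v : P → ℤ) (f : P → K) : P → K :=
  fun x => ∑ᶠ y ∈ {y : P | x ⋖ y}, (s x y : K) * (v y : K) * (v x : K) * f y

variable [GradeMinOrder ℕ P]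

/-- `(P, s, v)` is a signed poset: edge labels and vertex labels are signs, and
each rank of the graded poset `P` is finite. -/
def IsSignedPoset (s : P → P → ℤ) (v : P → ℤ) : Prop :=
  (∀ x y : P, x ⋖ y → s x y = 1 ∨ s x y = -1) ∧
  (∀ x : P, v x = 1 ∨ v x = -1) ∧
  (∀ n : ℕ, {x : P | grade ℕ x = n}.Finite)

/-- Weakly signed differential: `v(0̂) = 1` and `UD + DU = I` on `K̂P`. -/
def WeaklySignedDifferential (s : P → P → ℤ) (v : P → ℤ) : Prop :=
  v ⊥ = 1 ∧ ∀ f : P → K, Uop K s (Dop K s v f) + Dop K s v (Uop K s f) = f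

/-- α-signed differential: weakly signed differential and `(U + D)𝐏 = 𝐏`. -/
def AlphaSignedDifferential (s : P → P → ℤ) (v : P → ℤ) : Prop :=
  WeaklySignedDifferential K s v ∧
    Uop K s (fun _ => 1) + Dop K s v (fun _ => 1) = (fun _ => (1 : K))

/-- β-signed differential: weakly signed differential and `(D - U)𝐏 = 𝐏`. -/
def BetaSignedDifferential (s : P → P → ℤ) (v : P → ℤ) : Prop :=
  WeaklySignedDifferential K s v ∧
    Dop K s v (fun _ => 1) - Uop K s (fun _ => 1) = (fun _ => (1 : K))

end SDP


namespace SDPAux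
open SDP

variable {P : Type*} [PartialOrder P] [OrderBot P]

lemma chainSign_concat {α : Type*} (s : α → α → ℤ) :
    ∀ (l : List α) (y x : α), l.getLast? = some y →
      chainSign s (l ++ [x]) = chainSign s l * s y x := by
  intro l
  induction l with
  | nil => intro y x h; simp at h
  | cons a t ih =>
    intro y x h
    cases t with
    | nil =>
      simp only [List.getLast?_singleton, Option.some.injEq] at h
      subst h
      simp [chainSign]
    | cons b t' =>
      have h' : (b :: t').getLast? = some y := by
        rw [← h]; exact (List.getLast?_cons_cons ..).symm
      show s a b * chainSign s ((b :: t') ++ [x]) = (s a b * chainSign s (b :: t')) * s y x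
      rw [ih y x h']; ring

lemma chain_le : ∀ {l : List P}, l.Chain' (· ⋖ ·) → ∀ {a b : P},
    l.head? = some a → l.getLast? = some b → a ≤ b := by
  intro l
  induction l with
  | nil => intro _ a b h; simp at h
  | cons c t ih =>
    intro hc a b ha hb
    have hac : a = c := by
      have h := ha; simp at h; exact h.symm
    subst hac
    cases t with
    | nil => simp only [List.getLast?_singleton, Option.some.injEq] at hb; exact hb ▸ le_rfl
    | cons d t' =>
      have hcd : a ⋖ d := (List.isChain_cons_cons.mp hc).1
      have htl : (d :: t').Chain' (· ⋖ ·) := (List.isChain_cons_cons.mp hc).2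
      have hb' : (d :: t').getLast? = some b := by
        rw [← hb]; exact (List.getLast?_cons_cons ..).symm
      exact le_trans hcd.le (ih htl (by simp) hb')

lemma chainsTo_bot : chainsTo (⊥ : P) = ({[(⊥ : P)]} : Set (List P)) := by
  ext l
  constructor
  · rintro ⟨hc, hh, hl⟩
    cases l with
    | nil => simp at hh
    | cons a t =>
      have ha : a = ⊥ := by simpa using hh
      subst ha
      cases t with
      | nil => rfl
      | cons c t' =>
        exfalso
        have hac : (⊥ : P) ⋖ c := (List.isChain_cons_cons.mp hc).1
        have htl : (c :: t').Chain' (· ⋖ ·) := (List.isChain_cons_cons.mp hc).2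
        have hl' : (c :: t').getLast? = some (⊥ : P) := by
          rw [← hl]; exact (List.getLast?_cons_cons ..).symm
        have hcb : c ≤ ⊥ := chain_le htl (by simp) hl'
        exact absurd (le_bot_iff.mp hcb) hac.lt.ne'
  · rintro rfl
    exact ⟨List.isChain_singleton _, rfl, rfl⟩

lemma chainsTo_eq_biUnion {x : P} (hx : x ≠ ⊥) :
    chainsTo x = ⋃ y ∈ {y : P | y ⋖ x}, (fun l => l ++ [x]) '' chainsTo y := by
  ext l
  constructor
  · rintro ⟨hc, hh, hl⟩
    have hne : l ≠ [] := by rintro rfl; simp at hh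
    have hlast : l.getLast hne = x := by
      have := List.getLast?_eq_getLast (l := l) hne
      rw [this] at hl; exact Option.some.inj hl
    have hdec : l.dropLast ++ [x] = l := by
      conv_rhs => rw [← List.dropLast_concat_getLast hne]
      rw [hlast]
    have hl'ne : l.dropLast ≠ [] := by
      intro h0
      rw [h0, List.nil_append] at hdec
      rw [← hdec] at hh hl
      have : x = ⊥ := by simpa using hh
      exact hx this
    rw [← hdec] at hc hh
    unfold List.Chain' at hc; rw [List.isChain_append] at hc
    obtain ⟨hc1, _, hc3⟩ := hc
    have hy := List.getLast?_eq_getLast (l := l.dropLast) hl'ne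
    have hyx : l.dropLast.getLast hl'ne ⋖ x := hc3 _ hy x rfl
    have hhead : l.dropLast.head? = some (⊥ : P) := by
      obtain ⟨c, t, h⟩ := List.exists_cons_of_ne_nil hl'ne
      rw [h] at hh ⊢
      simpa using hh
    refine Set.mem_biUnion hyx ⟨l.dropLast, ⟨hc1, hhead, hy⟩, hdec⟩
  · intro hmem
    obtain ⟨y, hy, l', ⟨hc, hh, hl⟩, rfl⟩ := by
      simpa only [Set.mem_iUnion, Set.mem_image, exists_prop] using hmem
    have hl'ne : l' ≠ [] := by rintro rfl; simp at hh
    refine ⟨?_, ?_, List.getLast?_concat⟩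
    · unfold List.Chain'; rw [List.isChain_append]
      refine ⟨hc, List.isChain_singleton _, ?_⟩
      intro a ha b hb
      rw [hl] at ha
      have hb' : b = x := by
        have h := hb; simp at h; exact h.symm
      have ha' : a = y := by
        simp only [Option.mem_def, Option.some.injEq] at ha; exact ha.symm
      rw [ha', hb']; exact hy
    · obtain ⟨c, t, h⟩ := List.exists_cons_of_ne_nil hl'ne
      rw [h] at hh ⊢
      simpa using hh

variable [GradeMinOrder ℕ P]

lemma grade_of_covBy {x y : P} (h : x ⋖ y) : grade ℕ y = grade ℕ x + 1 :=
  ((Nat.covBy_iff_add_one_eq).mp (CovBy.grade ℕ h)).symm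

lemma grade_eq_zero_iff {x : P} : grade ℕ x = 0 ↔ x = ⊥ := by
  constructor
  · intro h
    by_contra hne
    have : (⊥ : P) < x := bot_lt_iff_ne_bot.mpr hne
    have h2 : grade ℕ (⊥ : P) < grade ℕ x := grade_strictMono this
    have h3 : grade ℕ (⊥ : P) = 0 := by
      have := grade_bot (𝕆 := ℕ) (α := P)
      simpa using this
    omega
  · rintro rfl
    have := grade_bot (𝕆 := ℕ) (α := P)
    simpa using this

variable (s : P → P → ℤ)

lemma covAbove_finite (hfin : ∀ n, {x : P | grade ℕ x = n}.Finite) (x : P) :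
    {y : P | x ⋖ y}.Finite :=
  (hfin (grade ℕ x + 1)).subset fun _ hy => grade_of_covBy hy

lemma covBelow_finite (hfin : ∀ n, {x : P | grade ℕ x = n}.Finite) (x : P) :
    {y : P | y ⋖ x}.Finite :=
  (hfin (grade ℕ x - 1)).subset fun _ hy => by
    have := grade_of_covBy hy; simp only [Set.mem_setOf_eq]; omega

lemma chainsTo_finite (hfin : ∀ n, {x : P | grade ℕ x = n}.Finite) (x : P) :
    (chainsTo x).Finite := by
  have key : ∀ n (x : P), grade ℕ x = n → (chainsTo x).Finite := by
    intro n
    induction n using Nat.strong_induction_on with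
    | _ n IH =>
      intro x hx
      by_cases hxb : x = ⊥
      · subst hxb; rw [chainsTo_bot]; exact Set.finite_singleton _
      · rw [chainsTo_eq_biUnion hxb]
        refine Set.Finite.biUnion (covBelow_finite hfin x) ?_
        intro y hy
        have h1 : grade ℕ y < n := by
          have := grade_of_covBy (hy : y ⋖ x); omega
        exact (IH _ h1 y rfl).image _
  exact key _ x rfl

lemma e_bot : e s (⊥ : P) = 1 := by
  rw [e, chainsTo_bot, finsum_mem_singleton]
  rfl

lemma e_rec (hfin : ∀ n, {x : P | grade ℕ x = n}.Finite) {x : P} (hx : x ≠ ⊥) :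
    e s x = ∑ y ∈ (covBelow_finite hfin x).toFinset, s y x * e s y := by
  have hdisj : ({y : P | y ⋖ x}).PairwiseDisjoint (fun y => (fun l => l ++ [x]) '' chainsTo y) := by
    intro y1 _ y2 _ hne
    rw [Function.onFun, Set.disjoint_left]
    rintro l ⟨l1, hl1, rfl⟩ ⟨l2, hl2, heq⟩
    have : l2 = l1 := List.append_cancel_right heq
    subst this
    exact hne (Option.some.inj (hl1.2.2.symm.trans hl2.2.2))
  rw [e, chainsTo_eq_biUnion hx,
    finsum_mem_biUnion hdisj (covBelow_finite hfin x)
      (fun y _ => (chainsTo_finite hfin y).image _),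
    finsum_mem_eq_finite_toFinset_sum _ (covBelow_finite hfin x)]
  refine Finset.sum_congr rfl fun y hy => ?_
  have hinj : Set.InjOn (fun l => l ++ [x]) (chainsTo y) :=
    fun l1 _ l2 _ h => List.append_cancel_right h
  rw [finsum_mem_image hinj,
    finsum_mem_congr rfl (fun l hl => chainSign_concat s l y x hl.2.2),
    finsum_mem_eq_finite_toFinset_sum _ (chainsTo_finite hfin y),
    e, finsum_mem_eq_finite_toFinset_sum _ (chainsTo_finite hfin y),
    Finset.mul_sum]
  exact Finset.sum_congr rfl fun l _ => by ring

end SDPAux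

section Ops
open SDP SDPAux

variable {P : Type*} [PartialOrder P] [OrderBot P] [GradeMinOrder ℕ P]
variable (K : Type*) [Field K] (s : P → P → ℤ) (v : P → ℤ)

lemma Uop_bot (f : P → K) : Uop K s f ⊥ = 0 := by
  have h : {x : P | x ⋖ (⊥ : P)} = ∅ := by
    ext z
    simp only [Set.mem_setOf_eq, Set.mem_empty_iff_false, iff_false]
    intro h; exact absurd h.lt (not_lt_bot)
  show ∑ᶠ x ∈ {x : P | x ⋖ (⊥ : P)}, (s x ⊥ : K) * f x = 0
  rw [h, finsum_mem_empty]

lemma Dop_sub (hfin : ∀ n, {x : P | grade ℕ x = n}.Finite) (f g : P → K) :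
    Dop K s v (f - g) = Dop K s v f - Dop K s v g := by
  funext x
  simp only [Dop, Pi.sub_apply]
  rw [finsum_mem_eq_finite_toFinset_sum _ (covAbove_finite hfin x),
      finsum_mem_eq_finite_toFinset_sum _ (covAbove_finite hfin x),
      finsum_mem_eq_finite_toFinset_sum _ (covAbove_finite hfin x),
      ← Finset.sum_sub_distrib]
  exact Finset.sum_congr rfl fun y _ => by ring

lemma Dop_add (hfin : ∀ n, {x : P | grade ℕ x = n}.Finite) (f g : P → K) :
    Dop K s v (f + g) = Dop K s v f + Dop K s v g := by
  funext x
  simp only [Dop, Pi.add_apply]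
  rw [finsum_mem_eq_finite_toFinset_sum _ (covAbove_finite hfin x),
      finsum_mem_eq_finite_toFinset_sum _ (covAbove_finite hfin x),
      finsum_mem_eq_finite_toFinset_sum _ (covAbove_finite hfin x),
      ← Finset.sum_add_distrib]
  exact Finset.sum_congr rfl fun y _ => by ring

lemma Dk_sub (hfin : ∀ n, {x : P | grade ℕ x = n}.Finite) :
    ∀ (k : ℕ) (f g : P → K),
      (Dop K s v)^[k] (f - g) = (Dop K s v)^[k] f - (Dop K s v)^[k] g := by
  intro k
  induction k with
  | zero => intro f g; simp
  | succ k ih =>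
    intro f g
    rw [Function.iterate_succ_apply, Function.iterate_succ_apply (Dop K s v) k f,
        Function.iterate_succ_apply (Dop K s v) k g, Dop_sub K s v hfin, ih]

lemma Dk_add (hfin : ∀ n, {x : P | grade ℕ x = n}.Finite) :
    ∀ (k : ℕ) (f g : P → K),
      (Dop K s v)^[k] (f + g) = (Dop K s v)^[k] f + (Dop K s v)^[k] g := by
  intro k
  induction k with
  | zero => intro f g; simp
  | succ k ih =>
    intro f g
    rw [Function.iterate_succ_apply, Function.iterate_succ_apply (Dop K s v) k f,
        Function.iterate_succ_apply (Dop K s v) k g, Dop_add K s v hfin, ih]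

lemma anticomm (hw : ∀ f : P → K, Uop K s (Dop K s v f) + Dop K s v (Uop K s f) = f)
    (f : P → K) : Dop K s v (Uop K s f) = f - Uop K s (Dop K s v f) :=
  eq_sub_of_add_eq' (hw f)

lemma comm_iter (hfin : ∀ n, {x : P | grade ℕ x = n}.Finite)
    (hw : ∀ f : P → K, Uop K s (Dop K s v f) + Dop K s v (Uop K s f) = f) :
    ∀ k : ℕ,
      (∀ f : P → K, (Dop K s v)^[2*k] (Uop K s f) = Uop K s ((Dop K s v)^[2*k] f)) ∧
      (∀ f : P → K, (Dop K s v)^[2*k+1] (Uop K s f)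
         = (Dop K s v)^[2*k] f - Uop K s ((Dop K s v)^[2*k+1] f)) := by
  intro k
  induction k with
  | zero =>
    constructor
    · intro f; simp
    · intro f; simpa using anticomm K s v hw f
  | succ k ih =>
    have h1 : 2*(k+1) = (2*k+1)+1 := by ring
    have heven : ∀ f : P → K,
        (Dop K s v)^[2*(k+1)] (Uop K s f) = Uop K s ((Dop K s v)^[2*(k+1)] f) := by
      intro f
      rw [h1, Function.iterate_succ_apply', ih.2 f, Dop_sub K s v hfin,
          anticomm K s v hw ((Dop K s v)^[2*k+1] f),
          ← Function.iterate_succ_apply' (Dop K s v) (2*k) f,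
          ← Function.iterate_succ_apply' (Dop K s v) (2*k+1) f]
      abel
    refine ⟨heven, ?_⟩
    intro f
    rw [Function.iterate_succ_apply, anticomm K s v hw f, Dk_sub K s v hfin,
        heven (Dop K s v f), ← Function.iterate_succ_apply (Dop K s v) (2*(k+1)) f]

lemma bridge (hsp : IsSignedPoset s v) (hv1 : v ⊥ = 1) :
    ∀ (k : ℕ) (f : P → K), (Dop K s v)^[k] f ⊥ =
      ∑ x ∈ (hsp.2.2 k).toFinset, (v x : K) * ((e s x : ℤ) : K) * f x := by
  intro k
  induction k with
  | zero =>
    intro f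
    have hA : (hsp.2.2 0).toFinset = {(⊥ : P)} := by
      ext z
      simp [Set.Finite.mem_toFinset, grade_eq_zero_iff]
    rw [Function.iterate_zero_apply, hA, Finset.sum_singleton, hv1, e_bot]
    simp
  | succ k ih =>
    intro f
    rw [Function.iterate_succ_apply, ih (Dop K s v f)]
    have hstep : ∀ x ∈ (hsp.2.2 k).toFinset,
        (v x : K) * ((e s x : ℤ) : K) * Dop K s v f x
          = ∑ y ∈ (covAbove_finite hsp.2.2 x).toFinset,
              ((e s x : ℤ) : K) * (s x y : K) * ((v y : K) * f y) := by
      intro x _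
      have hvx : (v x : K) * (v x : K) = 1 := by
        rcases hsp.2.1 x with h | h <;> rw [h] <;> norm_num
      show (v x : K) * ((e s x : ℤ) : K)
          * (∑ᶠ y ∈ {y : P | x ⋖ y}, (s x y : K) * (v y : K) * (v x : K) * f y) = _
      rw [finsum_mem_eq_finite_toFinset_sum _ (covAbove_finite hsp.2.2 x), Finset.mul_sum]
      refine Finset.sum_congr rfl fun y _ => ?_
      calc (v x : K) * ((e s x : ℤ) : K) * ((s x y : K) * (v y : K) * (v x : K) * f y)
          = ((v x : K) * (v x : K))
              * (((e s x : ℤ) : K) * (s x y : K) * ((v y : K) * f y)) := by ring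
        _ = _ := by rw [hvx, one_mul]
    rw [Finset.sum_congr rfl hstep]
    have hcomm : ∀ (x y : P),
        x ∈ (hsp.2.2 k).toFinset ∧ y ∈ (covAbove_finite hsp.2.2 x).toFinset
          ↔ x ∈ (covBelow_finite hsp.2.2 y).toFinset ∧ y ∈ (hsp.2.2 (k+1)).toFinset := by
      intro x y
      simp only [Set.Finite.mem_toFinset, Set.mem_setOf_eq]
      constructor
      · rintro ⟨hg, hc⟩; exact ⟨hc, by rw [grade_of_covBy hc, hg]⟩
      · rintro ⟨hc, hg⟩
        refine ⟨?_, hc⟩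
        have := grade_of_covBy hc; omega
    rw [Finset.sum_comm' hcomm]
    refine Finset.sum_congr rfl fun y hy => ?_
    have hy' : grade ℕ y = k + 1 := by
      simpa [Set.Finite.mem_toFinset] using hy
    have hyb : y ≠ ⊥ := by
      intro h
      rw [h] at hy'
      rw [grade_eq_zero_iff.mpr rfl] at hy'
      omega
    have herec : ((e s y : ℤ) : K)
        = ∑ x ∈ (covBelow_finite hsp.2.2 y).toFinset, (s x y : K) * ((e s x : ℤ) : K) := by
      rw [e_rec s hsp.2.2 hyb]
      push_cast
      rfl
    calc ∑ x ∈ (covBelow_finite hsp.2.2 y).toFinset,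
          ((e s x : ℤ) : K) * (s x y : K) * ((v y : K) * f y)
        = (∑ x ∈ (covBelow_finite hsp.2.2 y).toFinset, (s x y : K) * ((e s x : ℤ) : K))
            * ((v y : K) * f y) := by
          rw [Finset.sum_mul]
          exact Finset.sum_congr rfl fun x _ => by ring
      _ = ((e s y : ℤ) : K) * ((v y : K) * f y) := by rw [← herec]
      _ = (v y : K) * ((e s y : ℤ) : K) * f y := by ring

end Ops

/-- for `n ≥ 2`, in an α-signed differential poset
`∑_{x ∈ Pₙ} v(x) e(x) = 0`, and in a β-signed differential poset
`∑_{x ∈ Pₙ} v(x) e(x) = 2^{⌊n/2⌋}`. -/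
theorem statement7 {P : Type*} [PartialOrder P] [OrderBot P] [GradeMinOrder ℕ P]
    (K : Type*) [Field K] [CharZero K]
    (s : P → P → ℤ) (v : P → ℤ)
    (hsp : SDP.IsSignedPoset s v)
    (n : ℕ) (hn : 2 ≤ n) :
    (SDP.AlphaSignedDifferential K s v →
      (∑ᶠ x ∈ {x : P | grade ℕ x = n}, (v x) * SDP.e s x) = 0) ∧
    (SDP.BetaSignedDifferential K s v →
      (∑ᶠ x ∈ {x : P | grade ℕ x = n}, (v x) * SDP.e s x) = 2 ^ (n / 2)) := by
  classical
  have hfin := hsp.2.2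
  set F : P → K := (fun _ => (1 : K)) with hF
  set b : ℕ → K := fun k => (SDP.Dop K s v)^[k] F ⊥ with hb
  have hidx : ∀ a c : ℕ, a = c → b a = b c := fun a c h => by rw [h]
  -- the cast of the integer sum equals `b k`
  have hsum : ∀ (hv1 : v ⊥ = 1) (k : ℕ),
      ((∑ᶠ x ∈ {x : P | grade ℕ x = k}, (v x) * SDP.e s x : ℤ) : K) = b k := by
    intro hv1 k
    show _ = (SDP.Dop K s v)^[k] F ⊥
    rw [bridge K s v hsp hv1 k F,
      finsum_mem_eq_finite_toFinset_sum _ (hfin k)]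
    push_cast
    exact Finset.sum_congr rfl fun x _ => by simp [hF]
  have hb0 : b 0 = 1 := rfl
  constructor
  · -- α case
    intro hα
    have hw := hα.1
    have hci := comm_iter K s v hfin hw.2
    have hDP : SDP.Dop K s v F = F - SDP.Uop K s F := eq_sub_of_add_eq' hα.2
    have hrec : ∀ k, b (k+1) = b k - (SDP.Dop K s v)^[k] (SDP.Uop K s F) ⊥ := by
      intro k
      show (SDP.Dop K s v)^[k+1] F ⊥ = _
      rw [Function.iterate_succ_apply, hDP, Dk_sub K s v hfin, Pi.sub_apply]
    have heven : ∀ j, (SDP.Dop K s v)^[2*j] (SDP.Uop K s F) ⊥ = 0 := by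
      intro j; rw [(hci j).1 F]; exact Uop_bot K s _
    have hodd : ∀ j, (SDP.Dop K s v)^[2*j+1] (SDP.Uop K s F) ⊥ = b (2*j) := by
      intro j
      rw [(hci j).2 F, Pi.sub_apply, Uop_bot K s, sub_zero]
    have hstep1 : ∀ j, b (2*j+1) = b (2*j) := by
      intro j; rw [hrec (2*j), heven j, sub_zero]
    have hstep2 : ∀ j, b (2*j+2) = b (2*j+1) - b (2*j) := by
      intro j
      have h := hrec (2*j+1)
      rw [hodd j] at h
      exact (hidx (2*j+2) (2*j+1+1) (by omega)).trans h
    have hzero2 : ∀ j, b (2*j+2) = 0 := by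
      intro j; rw [hstep2 j, hstep1 j, sub_self]
    have hzero3 : ∀ j, b (2*j+3) = 0 := by
      intro j
      have h1 := hstep1 (j+1)
      have h2 := hzero2 j
      calc b (2*j+3) = b (2*(j+1)+1) := hidx _ _ (by omega)
        _ = b (2*(j+1)) := h1
        _ = b (2*j+2) := hidx _ _ (by omega)
        _ = 0 := h2
    have hbn : b n = 0 := by
      obtain ⟨j, hj⟩ : ∃ j, n = 2*j+2 ∨ n = 2*j+3 := ⟨(n-2)/2, by omega⟩
      rcases hj with hj | hj
      · rw [hidx n (2*j+2) hj]; exact hzero2 j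
      · rw [hidx n (2*j+3) hj]; exact hzero3 j
    have := hsum hw.1 n
    rw [hbn] at this
    exact_mod_cast this
  · -- β case
    intro hβ
    have hw := hβ.1
    have hci := comm_iter K s v hfin hw.2
    have hDP : SDP.Dop K s v F = F + SDP.Uop K s F := by
      have := hβ.2
      rw [sub_eq_iff_eq_add] at this
      exact this
    have hrec : ∀ k, b (k+1) = b k + (SDP.Dop K s v)^[k] (SDP.Uop K s F) ⊥ := by
      intro k
      show (SDP.Dop K s v)^[k+1] F ⊥ = _
      rw [Function.iterate_succ_apply, hDP, Dk_add K s v hfin, Pi.add_apply]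
    have heven : ∀ j, (SDP.Dop K s v)^[2*j] (SDP.Uop K s F) ⊥ = 0 := by
      intro j; rw [(hci j).1 F]; exact Uop_bot K s _
    have hodd : ∀ j, (SDP.Dop K s v)^[2*j+1] (SDP.Uop K s F) ⊥ = b (2*j) := by
      intro j
      rw [(hci j).2 F, Pi.sub_apply, Uop_bot K s, sub_zero]
    have hstep1 : ∀ j, b (2*j+1) = b (2*j) := by
      intro j; rw [hrec (2*j), heven j, add_zero]
    have hstep2 : ∀ j, b (2*j+2) = b (2*j+1) + b (2*j) := by
      intro j
      have h := hrec (2*j+1)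
      rw [hodd j] at h
      exact (hidx (2*j+2) (2*j+1+1) (by omega)).trans h
    have hval : ∀ j, b (2*j) = (2 : K)^j := by
      intro j
      induction j with
      | zero => simpa using hb0
      | succ j ih =>
        calc b (2*(j+1)) = b (2*j+2) := hidx _ _ (by omega)
          _ = b (2*j+1) + b (2*j) := hstep2 j
          _ = b (2*j) + b (2*j) := by rw [hstep1 j]
          _ = (2:K)^j + (2:K)^j := by rw [ih]
          _ = (2:K)^(j+1) := by ring
    have hbn : b n = (2:K)^(n/2) := by
      obtain ⟨j, hj⟩ : ∃ j, (n = 2*j ∨ n = 2*j+1) ∧ j = n/2 := ⟨n/2, by omega, rfl⟩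
      obtain ⟨hj1, hj2⟩ := hj
      subst hj2
      rcases hj1 with hj | hj
      · rw [hidx n (2*(n/2)) hj]; exact hval (n/2)
      · rw [hidx n (2*(n/2)+1) hj, hstep1 (n/2)]; exact hval (n/2)
    have := hsum hw.1 n
    rw [hbn] at this
    have h2 : (((2:ℤ)^(n/2) : ℤ) : K) = (2:K)^(n/2) := by push_cast; rfl
    rw [← h2] at this
    exact_mod_cast this
end

section
/- Let (P,s,v) be an α-signed differential poset and for k, n ≥ 0 set τ_{k,n} = ∑_{x ∈ P_n} v(x)·⟨D^k 𝐏_{n+k}, x⟩, where 𝐏_m = ∑_{y ∈ P_m} y (and τ_{k,n} = 0 for n < 0). Then for all n ≥ 0: τ_{1,n} + τ_{1,n−1} = ∑_{x ∈ P_n} v(x), and τ_{k,n} = 0 for every k ≥ 2. Equivalently, with G(P,t) = ∑_{x∈P} v(x) t^{ρ(x)} and G_k(P,t) = ∑_{n≥0} τ_{k,n} t^n as formal power series, (1+t)·G_1(P,t) = G(P,t) and G_k(P,t) = 0 for k ≥ 2. -/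
open scoped Classical

namespace SDP

variable {P : Type*} [PartialOrder P] [OrderBot P] (K : Type*) [Field K]
variable [GradeMinOrder ℕ P]

/-- `𝐏ₘ = ∑_{y ∈ Pₘ} y`, the indicator vector of the `m`-th rank (empty for `m < 0`). -/
noncomputable def rankIndicator (m : ℤ) : P → K :=
  fun p => if (grade ℕ p : ℤ) = m then 1 else 0

/-- `τ_{k,n} = ∑_{x ∈ Pₙ} v(x) ⟨Dᵏ 𝐏_{n+k}, x⟩` (zero for `n < 0`). -/
noncomputable def tau (s : P → P → ℤ) (v : P → ℤ) (k : ℕ) (n : ℤ) : K :=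
  ∑ᶠ x ∈ {x : P | (grade ℕ x : ℤ) = n},
    (v x : K) * ((Dop K s v)^[k] (rankIndicator K (n + k))) x

end SDP

/-!
Pair functions on `P` rank by rank, `⟨f, g⟩ₙ = ∑_{x ∈ Pₙ} v(x) f(x) g(x)`. Because `v² = 1`,
`U` and `D` are adjoint for this pairing, `⟨f, U g⟩ₙ = ⟨D f, g⟩ₙ₋₁`, and this turns `τ_{k,n}` into
`⟨𝐏, Dᵏ 𝐏⟩ₙ`. For `k = 1` the α-condition gives `τ_{1,n} + τ_{1,n-1} = ⟨𝐏, (D + U) 𝐏⟩ₙ = ⟨𝐏, 𝐏⟩ₙ`.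
For `k ≥ 2`: squaring `(U + D)𝐏 = 𝐏` and using `UD + DU = I` gives `D²𝐏 = -U²𝐏`, and `UD + DU = I`
also makes `D` commute with `U²`, so `Dᵏ𝐏 = -U² Dᵏ⁻²𝐏`. Moving `U²` across the pairing, where it
acts on `𝐏` as `-D²`, shows `τ_{k,n} = τ_{k,n-4}`; as `τ_{k,n} = 0` for `n < 0`, it vanishes.
-/

theorem finsum_mem_eq_finsum_mem_ite {α M : Type*} [AddCommMonoid M] {s t : Set α}
    [DecidablePred (· ∈ s)] (hst : s ⊆ t) (f : α → M) :
    ∑ᶠ i ∈ s, f i = ∑ᶠ i ∈ t, if i ∈ s then f i else 0 := by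
  rw [finsum_mem_def, finsum_mem_def]
  congr 1
  ext i
  by_cases hs : i ∈ s
  · simp [hs, hst hs]
  · by_cases ht : i ∈ t <;> simp [hs, ht]

theorem Commute.sq_of_mul_add_mul_eq_one {R : Type*} [Ring R] {a b : R}
    (h : a * b + b * a = 1) : Commute b (a ^ 2) := by
  have key : b * a ^ 2 - a ^ 2 * b = (a * b + b * a) * a - a * (a * b + b * a) := by noncomm_ring
  rw [h, one_mul, mul_one, sub_self, sub_eq_zero] at key
  exact key

theorem add_sq_of_mul_add_mul_eq_one {R : Type*} [Ring R] {a b : R}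
    (h : a * b + b * a = 1) : (a + b) ^ 2 = a ^ 2 + b ^ 2 + 1 := by
  rw [← h]
  noncomm_ring

namespace SDP

variable {P : Type*} [PartialOrder P] [GradeMinOrder ℕ P]

theorem grade_eq_add_one_of_covBy {x y : P} (h : x ⋖ y) : grade ℕ y = grade ℕ x + 1 :=
  (Nat.covBy_iff_add_one_eq.mp (h.grade ℕ)).symm

section Pairing

variable {K : Type*} [Field K] (v : P → ℤ)

noncomputable def rankPairing (n : ℤ) (f g : P → K) : K :=
  ∑ᶠ x ∈ {x : P | (grade ℕ x : ℤ) = n}, (v x : K) * f x * g x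

theorem rankPairing_of_neg {n : ℤ} (hn : n < 0) (f g : P → K) : rankPairing v n f g = 0 := by
  have hempty : {x : P | (grade ℕ x : ℤ) = n} = ∅ :=
    Set.eq_empty_of_forall_notMem fun x hx => by rw [Set.mem_ofPred_eq] at hx; omega
  rw [rankPairing, hempty, finsum_mem_empty]

theorem rankPairing_comm (n : ℤ) (f g : P → K) : rankPairing v n f g = rankPairing v n g f :=
  finsum_mem_congr rfl fun _ _ => by ring

theorem rankPairing_congr_left {n : ℤ} {f f' : P → K}
    (h : ∀ x, (grade ℕ x : ℤ) = n → f x = f' x) (g : P → K) :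
    rankPairing v n f g = rankPairing v n f' g :=
  finsum_mem_congr rfl fun x hx => by rw [h x hx]

theorem rankPairing_neg_right (n : ℤ) (f g : P → K) :
    rankPairing v n f (-g) = -rankPairing v n f g := by
  simp only [rankPairing, Pi.neg_apply, mul_neg, finsum_neg_distrib]

end Pairing

section Finite

variable (hfin : ∀ n : ℕ, {x : P | grade ℕ x = n}.Finite)
include hfin

theorem finite_rank (n : ℤ) : {x : P | (grade ℕ x : ℤ) = n}.Finite :=
  (hfin n.toNat).subset fun x hx => by rw [Set.mem_ofPred_eq] at hx ⊢; omega

theorem finite_covBy_left (y : P) : {x : P | x ⋖ y}.Finite :=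
  (hfin (grade ℕ y - 1)).subset fun x hx => by
    have := grade_eq_add_one_of_covBy hx
    rw [Set.mem_ofPred_eq]
    omega

theorem finite_covBy_right (x : P) : {y : P | x ⋖ y}.Finite :=
  (hfin (grade ℕ x + 1)).subset fun _ hy => grade_eq_add_one_of_covBy hy

variable (K : Type*) [Field K] (s : P → P → ℤ) (v : P → ℤ)

noncomputable def upEnd : Module.End K (P → K) where
  toFun := Uop K s
  map_add' f g := funext fun y => by
    simp only [Uop, Pi.add_apply, mul_add]
    exact finsum_mem_add_distrib (finite_covBy_left hfin y)
  map_smul' c f := funext fun y => by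
    simp only [Uop, Pi.smul_apply, smul_eq_mul, RingHom.id_apply, mul_finsum_mem]
    exact finsum_mem_congr rfl fun _ _ => by ring

noncomputable def downEnd : Module.End K (P → K) where
  toFun := Dop K s v
  map_add' f g := funext fun x => by
    simp only [Dop, Pi.add_apply, mul_add]
    exact finsum_mem_add_distrib (finite_covBy_right hfin x)
  map_smul' c f := funext fun x => by
    simp only [Dop, Pi.smul_apply, smul_eq_mul, RingHom.id_apply, mul_finsum_mem]
    exact finsum_mem_congr rfl fun _ _ => by ring

variable {K s v}

theorem coe_upEnd : ⇑(upEnd hfin K s) = Uop K s := rfl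

theorem coe_downEnd : ⇑(downEnd hfin K s v) = Dop K s v := rfl

theorem rankPairing_add_right (n : ℤ) (f g h : P → K) :
    rankPairing v n f (g + h) = rankPairing v n f g + rankPairing v n f h := by
  simp only [rankPairing, Pi.add_apply, mul_add]
  exact finsum_mem_add_distrib (finite_rank hfin n)

theorem rankPairing_upEnd (hv : ∀ x, v x = 1 ∨ v x = -1) (n : ℤ) (f g : P → K) :
    rankPairing v n f (upEnd hfin K s g) = rankPairing v (n - 1) (downEnd hfin K s v f) g := by
  have hv2 : ∀ x, (v x : K) * v x = 1 := fun x => by rcases hv x with h | h <;> simp [h]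
  set A := {y : P | (grade ℕ y : ℤ) = n}
  set B := {x : P | (grade ℕ x : ℤ) = n - 1}
  have hcov : ∀ {x y : P}, x ⋖ y → (y ∈ A ↔ x ∈ B) := fun h => by
    have := grade_eq_add_one_of_covBy h
    simp only [A, B, Set.mem_ofPred_eq]
    omega
  let F : P → P → K := fun x y => if x ⋖ y then (v y : K) * f y * s x y * g x else 0
  have lhs : rankPairing v n f (upEnd hfin K s g) = ∑ᶠ y ∈ A, ∑ᶠ x ∈ B, F x y := by
    refine finsum_mem_congr rfl fun y hy => ?_
    rw [coe_upEnd, Uop, mul_finsum_mem,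
      finsum_mem_eq_finsum_mem_ite (s := {x | x ⋖ y}) fun x hx => (hcov hx).1 hy]
    refine finsum_mem_congr rfl fun x _ => ?_
    simp only [F, Set.mem_ofPred_eq]
    split_ifs <;> ring
  have rhs : rankPairing v (n - 1) (downEnd hfin K s v f) g = ∑ᶠ x ∈ B, ∑ᶠ y ∈ A, F x y := by
    refine finsum_mem_congr rfl fun x hx => ?_
    rw [coe_downEnd, Dop, mul_finsum_mem, finsum_mem_mul,
      finsum_mem_eq_finsum_mem_ite (s := {y | x ⋖ y}) fun y hy => (hcov hy).2 hx]
    refine finsum_mem_congr rfl fun y _ => ?_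
    simp only [F, Set.mem_ofPred_eq]
    split_ifs
    · linear_combination ((s x y : K) * v y * f y * g x) * hv2 x
    · rfl
  rw [lhs, rhs, finsum_mem_comm _ (finite_rank hfin n) (finite_rank hfin (n - 1))]

theorem rankPairing_upEnd_pow (hv : ∀ x, v x = 1 ∨ v x = -1) (k : ℕ) (n : ℤ) (f g : P → K) :
    rankPairing v n f ((upEnd hfin K s ^ k) g)
      = rankPairing v (n - k) ((downEnd hfin K s v ^ k) f) g := by
  induction k generalizing n f with
  | zero => simp
  | succ k ih =>
    rw [pow_succ', Module.End.mul_apply, rankPairing_upEnd hfin hv, ih, pow_succ,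
      Module.End.mul_apply]
    congr 1
    push_cast
    ring

theorem tau_eq_rankPairing (hv : ∀ x, v x = 1 ∨ v x = -1) (k : ℕ) (n : ℤ) :
    tau K s v k n = rankPairing v n 1 ((downEnd hfin K s v ^ k) 1) :=
  calc tau K s v k n
      = rankPairing v n ((downEnd hfin K s v ^ k) (rankIndicator K (n + k))) 1 :=
        finsum_mem_congr rfl fun x _ => by rw [Module.End.pow_apply, Pi.one_apply, mul_one]; rfl
    _ = rankPairing v (n + k) (rankIndicator K (n + k)) ((upEnd hfin K s ^ k) 1) := by
        rw [rankPairing_upEnd_pow hfin hv, add_sub_cancel_right]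
    _ = rankPairing v (n + k) 1 ((upEnd hfin K s ^ k) 1) :=
        rankPairing_congr_left v (fun x hx => if_pos hx) _
    _ = rankPairing v n 1 ((downEnd hfin K s v ^ k) 1) := by
        rw [rankPairing_upEnd_pow hfin hv, add_sub_cancel_right, rankPairing_comm]

variable [OrderBot P]

theorem upEnd_mul_downEnd_add_downEnd_mul_upEnd (h : WeaklySignedDifferential K s v) :
    upEnd hfin K s * downEnd hfin K s v + downEnd hfin K s v * upEnd hfin K s = 1 :=
  LinearMap.ext h.2

theorem downEnd_sq_apply_one (h : AlphaSignedDifferential K s v) :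
    (downEnd hfin K s v ^ 2) 1 = -(upEnd hfin K s ^ 2) 1 := by
  have hsum : (upEnd hfin K s + downEnd hfin K s v) 1 = 1 := h.2
  have hsq := congrArg (· (1 : P → K))
    (add_sq_of_mul_add_mul_eq_one (upEnd_mul_downEnd_add_downEnd_mul_upEnd hfin h.1))
  simp only [sq (upEnd hfin K s + downEnd hfin K s v), Module.End.mul_apply, hsum,
    LinearMap.add_apply, Module.End.one_apply] at hsq
  exact eq_neg_of_add_eq_zero_right (add_eq_right.mp hsq.symm)

theorem downEnd_pow_add_two_apply_one (h : AlphaSignedDifferential K s v) (k : ℕ) :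
    (downEnd hfin K s v ^ (k + 2)) 1 = -(upEnd hfin K s ^ 2) ((downEnd hfin K s v ^ k) 1) := by
  have hcomm := (Commute.sq_of_mul_add_mul_eq_one
    (upEnd_mul_downEnd_add_downEnd_mul_upEnd hfin h.1)).pow_left k
  rw [pow_add, Module.End.mul_apply, downEnd_sq_apply_one hfin h, map_neg,
    ← Module.End.mul_apply, hcomm.eq, Module.End.mul_apply]

theorem tau_one_add_tau_one_sub_one (hv : ∀ x, v x = 1 ∨ v x = -1)
    (h : AlphaSignedDifferential K s v) (n : ℤ) :
    tau K s v 1 n + tau K s v 1 (n - 1) = rankPairing v n 1 1 := by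
  have hsum : downEnd hfin K s v 1 + upEnd hfin K s 1 = 1 := (add_comm _ _).trans h.2
  rw [tau_eq_rankPairing hfin hv, tau_eq_rankPairing hfin hv, pow_one,
    rankPairing_comm v (n - 1), ← rankPairing_upEnd hfin hv, ← rankPairing_add_right hfin, hsum]

theorem rankPairing_one_upEnd_sq (hv : ∀ x, v x = 1 ∨ v x = -1)
    (h : AlphaSignedDifferential K s v) (n : ℤ) (g : P → K) :
    rankPairing v n 1 ((upEnd hfin K s ^ 2) g)
      = -rankPairing v (n - 4) 1 ((downEnd hfin K s v ^ 2) g) := by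
  rw [rankPairing_upEnd_pow hfin hv, downEnd_sq_apply_one hfin h, rankPairing_comm,
    rankPairing_neg_right, rankPairing_upEnd_pow hfin hv, rankPairing_comm]
  congr 2
  push_cast
  ring

theorem tau_add_two_periodic (hv : ∀ x, v x = 1 ∨ v x = -1)
    (h : AlphaSignedDifferential K s v) (k : ℕ) :
    Function.Periodic (tau K s v (k + 2)) 4 := fun n => by
  rw [tau_eq_rankPairing hfin hv _ (n + 4), downEnd_pow_add_two_apply_one hfin h,
    rankPairing_neg_right, rankPairing_one_upEnd_sq hfin hv h, neg_neg, add_sub_cancel_right,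
    ← Module.End.mul_apply, ← pow_add, add_comm 2 k, tau_eq_rankPairing hfin hv]

theorem tau_add_two_eq_zero (hv : ∀ x, v x = 1 ∨ v x = -1)
    (h : AlphaSignedDifferential K s v) (k : ℕ) (n : ℤ) : tau K s v (k + 2) n = 0 := by
  rw [← (tau_add_two_periodic hfin hv h k).sub_nat_mul_eq (n.toNat + 1),
    tau_eq_rankPairing hfin hv]
  exact rankPairing_of_neg v (by push_cast; omega) _ _

end Finite

end SDP

theorem statement8_general {P : Type*} [PartialOrder P] [OrderBot P] [GradeMinOrder ℕ P]
    (K : Type*) [Field K]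
    (s : P → P → ℤ) (v : P → ℤ)
    (hsp : SDP.IsSignedPoset s v)
    (halpha : SDP.AlphaSignedDifferential K s v) :
    (∀ n : ℕ, SDP.tau K s v 1 (n : ℤ) + SDP.tau K s v 1 ((n : ℤ) - 1)
      = ∑ᶠ x ∈ {x : P | grade ℕ x = n}, (v x : K)) ∧
    (∀ k : ℕ, 2 ≤ k → ∀ n : ℕ, SDP.tau K s v k (n : ℤ) = 0) := by
  obtain ⟨-, hv, hfin⟩ := hsp
  refine ⟨fun n => ?_, fun k hk n => ?_⟩
  · rw [SDP.tau_one_add_tau_one_sub_one hfin hv halpha]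
    unfold SDP.rankPairing
    exact finsum_mem_congr (by simp) fun x _ => by simp
  · obtain ⟨k, rfl⟩ := Nat.exists_eq_add_of_le' hk
    exact SDP.tau_add_two_eq_zero hfin hv halpha k n

/-- in an α-signed differential poset, for all `n ≥ 0`:
`τ_{1,n} + τ_{1,n−1} = ∑_{x ∈ Pₙ} v(x)`, and `τ_{k,n} = 0` for every `k ≥ 2`. -/
theorem statement8 {P : Type*} [PartialOrder P] [OrderBot P] [GradeMinOrder ℕ P]
    (K : Type*) [Field K] [CharZero K]
    (s : P → P → ℤ) (v : P → ℤ)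
    (hsp : SDP.IsSignedPoset s v)
    (halpha : SDP.AlphaSignedDifferential K s v) :
    (∀ n : ℕ, SDP.tau K s v 1 (n : ℤ) + SDP.tau K s v 1 ((n : ℤ) - 1)
      = ∑ᶠ x ∈ {x : P | grade ℕ x = n}, (v x : K)) ∧
    (∀ k : ℕ, 2 ≤ k → ∀ n : ℕ, SDP.tau K s v k (n : ℤ) = 0) :=
  statement8_general K s v hsp halpha
end
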